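/- There is a constant C such that for all sufficiently large x, the number of composite integers n ≤ x satisfying rad(φ(n)) ∣ n − 1 whose largest prime factor exceeds L(x)² is at most C · x / L(x), where L(x) = exp(log x · (log log log x)/(log log x)). -/

import Mathlib

/-!
If `p ∣ n` then `φ p ∣ φ n`, so `rad (p - 1) ∣ rad (φ n) ∣ n - 1`. Writing `n = p * m`, this forces
`m ≡ 1 [MOD rad (p - 1)]` with `m > 1`, which leaves at most `x / (p * rad (p - 1))` values of `n`
for each prime `p`. Summing over `p > L(x)²` gives at most `x / L(x)² * ∑_{m ≤ x} 1 / rad m`.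
Rankin's trick bounds this sum by `x ^ σ * ∑_m m ^ (-σ) / rad m`, and the Euler product of the
multiplicative weight `m ^ (-σ) / rad m` is at most `exp (∑_p 1 / (σ p log p))
≤ exp ((log log x + 2) / σ)`. The choice `σ = log log log x / (2 log log x)` makes the total
at most `L(x) / 2`.
-/

open Finset
open scoped Classical

/-- The radical of a natural number: the product of its distinct prime divisors. -/
def rad (n : ℕ) : ℕ := ∏ p ∈ n.primeFactors, p

/-- `L x = exp(log x · (log log log x)/(log log x))`. -/
noncomputable def L (x : ℝ) : ℝ :=
  Real.exp (Real.log x * (Real.log (Real.log (Real.log x)) / Real.log (Real.log x)))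

open Real Filter

lemma rad_pos (n : ℕ) : 0 < rad n :=
  prod_pos fun _ hp => (Nat.prime_of_mem_primeFactors hp).pos

lemma rad_dvd_rad {a b : ℕ} (h : a ∣ b) (hb : b ≠ 0) : rad a ∣ rad b :=
  prod_dvd_prod_of_subset _ _ _ (Nat.primeFactors_mono h hb)

lemma rad_prime_pow {p k : ℕ} (hp : p.Prime) (hk : k ≠ 0) : rad (p ^ k) = p := by
  rw [rad, Nat.primeFactors_prime_pow hk hp, prod_singleton]

lemma rad_mul_of_coprime {a b : ℕ} (h : a.Coprime b) : rad (a * b) = rad a * rad b := by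
  rw [rad, h.primeFactors_mul, prod_union h.disjoint_primeFactors, rad, rad]

lemma rad_dvd_sub_one_of_prime_dvd {n p : ℕ} (hp : p.Prime) (hpn : p ∣ n) (hn : n ≠ 0)
    (h : rad n.totient ∣ n - 1) : rad (p - 1) ∣ n - 1 := by
  have hφ : p - 1 ∣ n.totient := Nat.totient_prime hp ▸ Nat.totient_dvd_of_dvd hpn
  exact (rad_dvd_rad hφ (Nat.totient_pos.mpr (Nat.pos_of_ne_zero hn)).ne').trans h

lemma card_filter_dvd_sub_one_le {k d : ℕ} (N : ℕ) (hk : 0 < k) (hd : d ∣ k - 1) :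
    #{n ∈ Icc 1 N | k ∣ n ∧ n ≠ k ∧ d ∣ n - 1} ≤ N / (k * d) := by
  -- such `n` are `k * m` with `m ≡ 1 [MOD d]` and `m ≠ 1`, i.e. `n = k * (d * t + 1)` with `t ≥ 1`
  have hsub : {n ∈ Icc 1 N | k ∣ n ∧ n ≠ k ∧ d ∣ n - 1} ⊆
      (Icc 1 (N / (k * d))).image fun t => k * (d * t + 1) := by
    intro n hn
    simp only [mem_filter, mem_Icc] at hn
    obtain ⟨⟨hn1, hnN⟩, ⟨m, rfl⟩, hnk, hdn⟩ := hn
    have hm0 : m ≠ 0 := by rintro rfl; omega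
    have hm1 : m ≠ 1 := by rintro rfl; simp at hnk
    have hk1 : 1 ≡ k [MOD d] := (Nat.modEq_iff_dvd' hk).mpr hd
    have hkm : 1 ≡ k * m [MOD d] := (Nat.modEq_iff_dvd' hn1).mpr hdn
    have hmd : 1 ≡ m [MOD d] := by simpa using hkm.trans (hk1.mul_right m).symm
    obtain ⟨t, ht⟩ := (Nat.modEq_iff_dvd' (by omega)).mp hmd
    have ht0 : 0 < d * t := by omega
    refine mem_image.mpr
      ⟨t, mem_Icc.mpr ⟨Nat.pos_of_mul_pos_left ht0, ?_⟩, by rw [← ht]; congr; omega⟩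
    rw [Nat.le_div_iff_mul_le (Nat.mul_pos hk (Nat.pos_of_mul_pos_right ht0))]
    calc t * (k * d) = k * (m - 1) := by rw [ht]; ring
      _ ≤ N := le_trans (Nat.mul_le_mul_left _ (Nat.sub_le _ _)) hnN
  calc _ ≤ #((Icc 1 (N / (k * d))).image fun t => k * (d * t + 1)) := card_le_card hsub
    _ ≤ N / (k * d) := card_image_le.trans (by simp)

lemma sum_one_div_rad_sub_one_le {s : Finset ℕ} {N : ℕ} (hs : s ⊆ Icc 2 N) :
    ∑ k ∈ s, 1 / (rad (k - 1) : ℝ) ≤ ∑ m ∈ Icc 1 N, 1 / (rad m : ℝ) := by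
  have hinj : Set.InjOn (· - 1) (s : Set ℕ) := fun a ha b hb hab => by
    have := mem_Icc.mp (hs ha); have := mem_Icc.mp (hs hb); simp only at hab; omega
  rw [← sum_image (g := (· - 1)) (f := fun m => 1 / (rad m : ℝ)) hinj]
  refine sum_le_sum_of_subset_of_nonneg (fun m hm => ?_) (fun _ _ _ => by positivity)
  obtain ⟨k, hk, rfl⟩ := mem_image.mp hm
  have := mem_Icc.mp (hs hk)
  exact mem_Icc.mpr ⟨by omega, by omega⟩

lemma card_filter_rad_totient_dvd_le {y : ℝ} (hy : 0 < y) (N : ℕ) :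
    (#{n ∈ Icc 1 N | ¬ n.Prime ∧ rad n.totient ∣ n - 1 ∧ ∃ p : ℕ, p.Prime ∧ p ∣ n ∧ y < p} : ℝ)
      ≤ N / y * ∑ m ∈ Icc 1 N, 1 / (rad m : ℝ) := by
  set P := (Icc 2 N).filter fun k : ℕ => y < k
  set T := fun k : ℕ => {n ∈ Icc 1 N | k ∣ n ∧ n ≠ k ∧ rad (k - 1) ∣ n - 1}
  have hcover : {n ∈ Icc 1 N | ¬ n.Prime ∧ rad n.totient ∣ n - 1 ∧
      ∃ p : ℕ, p.Prime ∧ p ∣ n ∧ y < p} ⊆ P.biUnion T := by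
    intro n hn
    simp only [mem_filter, mem_Icc] at hn
    obtain ⟨⟨hn1, hnN⟩, hnp, hrad, p, hp, hpn, hyp⟩ := hn
    have hpn' := Nat.le_of_dvd hn1 hpn
    refine mem_biUnion.mpr ⟨p, mem_filter.mpr ⟨mem_Icc.mpr ⟨hp.two_le, by omega⟩, hyp⟩, ?_⟩
    exact mem_filter.mpr ⟨mem_Icc.mpr ⟨hn1, hnN⟩, hpn, by rintro rfl; exact hnp hp,
      rad_dvd_sub_one_of_prime_dvd hp hpn (by omega) hrad⟩
  have hT : ∀ k ∈ P, (#(T k) : ℝ) ≤ N / y * (1 / rad (k - 1)) := fun k hk => by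
    obtain ⟨hk, hyk⟩ := mem_filter.mp hk
    have hk0 : 0 < k := by have := (mem_Icc.mp hk).1; omega
    have hr : (0 : ℝ) < rad (k - 1) := by exact_mod_cast rad_pos _
    calc (#(T k) : ℝ) ≤ ((N / (k * rad (k - 1)) : ℕ) : ℝ) := by
          exact_mod_cast card_filter_dvd_sub_one_le N hk0 (Nat.prod_primeFactors_dvd _)
      _ ≤ N / (k * rad (k - 1)) := by exact_mod_cast Nat.cast_div_le
      _ ≤ N / (y * rad (k - 1)) := by gcongr
      _ = N / y * (1 / rad (k - 1)) := by field_simp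
  calc (#{n ∈ Icc 1 N | ¬ n.Prime ∧ rad n.totient ∣ n - 1 ∧
          ∃ p : ℕ, p.Prime ∧ p ∣ n ∧ y < p} : ℝ)
      ≤ ∑ k ∈ P, (#(T k) : ℝ) := by exact_mod_cast (card_le_card hcover).trans card_biUnion_le
    _ ≤ ∑ k ∈ P, N / y * (1 / rad (k - 1) : ℝ) := sum_le_sum hT
    _ ≤ N / y * ∑ m ∈ Icc 1 N, 1 / (rad m : ℝ) := by
        rw [← mul_sum]
        gcongr
        exact sum_one_div_rad_sub_one_le (filter_subset _ _)

noncomputable def rankinWeight (σ : ℝ) (m : ℕ) : ℝ := (m : ℝ) ^ (-σ) / rad m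

namespace rankinWeight

lemma nonneg (σ : ℝ) (m : ℕ) : 0 ≤ rankinWeight σ m := by
  unfold rankinWeight; positivity

@[simp] lemma one (σ : ℝ) : rankinWeight σ 1 = 1 := by
  simp [rankinWeight, rad]

lemma mul_of_coprime (σ : ℝ) {m n : ℕ} (h : m.Coprime n) :
    rankinWeight σ (m * n) = rankinWeight σ m * rankinWeight σ n := by
  rw [rankinWeight, rankinWeight, rankinWeight, rad_mul_of_coprime h, Nat.cast_mul,
    Nat.cast_mul, mul_rpow (Nat.cast_nonneg _) (Nat.cast_nonneg _), mul_div_mul_comm]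

lemma prime_pow_succ (σ : ℝ) {p : ℕ} (hp : p.Prime) (k : ℕ) :
    rankinWeight σ (p ^ (k + 1)) = ((p : ℝ) ^ (-σ)) ^ (k + 1) / p := by
  rw [rankinWeight, rad_prime_pow hp k.succ_ne_zero, Nat.cast_pow,
    ← rpow_natCast, ← rpow_natCast, ← rpow_mul (Nat.cast_nonneg _),
    ← rpow_mul (Nat.cast_nonneg _), mul_comm]

variable {σ : ℝ}

lemma hasSum_prime_pow (hσ : 0 < σ) {p : ℕ} (hp : p.Prime) :
    HasSum (fun k => rankinWeight σ (p ^ k)) (1 + 1 / (p * ((p : ℝ) ^ σ - 1))) := by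
  have hp1 : (1 : ℝ) < p := by exact_mod_cast hp.one_lt
  have hq : 1 < (p : ℝ) ^ σ := one_lt_rpow hp1 hσ
  have hr : (p : ℝ) ^ (-σ) = ((p : ℝ) ^ σ)⁻¹ := rpow_neg (by linarith) σ
  have hgeom := hasSum_geometric_of_lt_one (inv_nonneg.mpr (by linarith)) (inv_lt_one_of_one_lt₀ hq)
  have htail : HasSum (fun k => rankinWeight σ (p ^ (k + 1))) (1 / (p * ((p : ℝ) ^ σ - 1))) := by
    simp_rw [prime_pow_succ σ hp, hr, pow_succ]
    have hval : 1 / (p * ((p : ℝ) ^ σ - 1)) = (1 - ((p : ℝ) ^ σ)⁻¹)⁻¹ * ((p : ℝ) ^ σ)⁻¹ / p := by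
      field_simp
    rw [hval]
    exact (hgeom.mul_right _).div_const _
  simpa [add_comm] using (hasSum_nat_add_iff' 1).mp (by simpa using htail)

lemma tsum_prime_pow_le_exp (hσ : 0 < σ) {p : ℕ} (hp : p.Prime) :
    ∑' k, rankinWeight σ (p ^ k) ≤ exp (1 / (σ * p * log p)) := by
  have hp1 : (1 : ℝ) < p := by exact_mod_cast hp.one_lt
  have hpσ : σ * log p ≤ (p : ℝ) ^ σ - 1 := by
    rw [rpow_def_of_pos (by linarith), mul_comm]
    linarith [add_one_le_exp (log p * σ)]
  have hle : 1 / (p * ((p : ℝ) ^ σ - 1)) ≤ 1 / (σ * p * log p) :=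
    one_div_le_one_div_of_le (mul_pos (mul_pos hσ (by linarith)) (log_pos hp1)) (by nlinarith)
  rw [(hasSum_prime_pow hσ hp).tsum_eq]
  linarith [add_one_le_exp (1 / (σ * p * log p))]

lemma sum_Icc_le_prod_primesBelow (hσ : 0 < σ) (N : ℕ) :
    ∑ m ∈ Icc 1 N, rankinWeight σ m ≤ ∏ p ∈ (N + 1).primesBelow, ∑' k, rankinWeight σ (p ^ k) := by
  have hsum : ∀ {p : ℕ}, p.Prime → Summable fun k => ‖rankinWeight σ (p ^ k)‖ := fun hp => by
    simpa only [norm_of_nonneg (nonneg σ _)] using (hasSum_prime_pow hσ hp).summable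
  have hEuler := (EulerProduct.summable_and_hasSum_smoothNumbers_prod_primesBelow_tsum
    (one σ) (mul_of_coprime σ) hsum (N + 1)).2
  have hsmooth : ∀ m ∈ Icc 1 N, m ∈ (N + 1).smoothNumbers := fun m hm => by
    rw [mem_Icc] at hm
    exact Nat.mem_smoothNumbers_of_lt (by omega) (by omega)
  calc ∑ m ∈ Icc 1 N, rankinWeight σ m
      = ∑ m ∈ (Icc 1 N).subtype (· ∈ (N + 1).smoothNumbers), rankinWeight σ m := by
        rw [sum_subtype_eq_sum_filter, filter_true_of_mem hsmooth]
    _ ≤ _ := sum_le_hasSum _ (fun m _ => nonneg σ m) hEuler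

end rankinWeight

lemma one_div_rad_le_rpow_mul_rankinWeight {σ : ℝ} (hσ : 0 ≤ σ) {m N : ℕ} (hm : 1 ≤ m)
    (hmN : m ≤ N) : 1 / (rad m : ℝ) ≤ (N : ℝ) ^ σ * rankinWeight σ m := by
  have hm0 : (0 : ℝ) < m := by exact_mod_cast hm
  have hmσ : 1 ≤ (N : ℝ) ^ σ * (m : ℝ) ^ (-σ) := by
    rw [rpow_neg hm0.le, ← div_eq_mul_inv, one_le_div (rpow_pos_of_pos hm0 σ)]
    exact rpow_le_rpow hm0.le (by exact_mod_cast hmN) hσ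
  rw [rankinWeight, ← mul_div_assoc]
  gcongr

lemma one_div_mul_log_le_log_log_sub {y : ℝ} (hy : 1 < y) :
    1 / ((y + 1) * log (y + 1)) ≤ log (log (y + 1)) - log (log y) := by
  have hu : 0 < log y := log_pos hy
  have hv : 0 < log (y + 1) := log_pos (by linarith)
  -- both steps are `1 - t⁻¹ ≤ log t`, at `t = (y + 1) / y` and at `t = log (y + 1) / log y`
  have hlog : 1 / (y + 1) ≤ log (y + 1) - log y := by
    have := one_sub_inv_le_log_of_pos (x := (y + 1) / y) (by positivity)
    rw [log_div (by linarith) (by linarith), inv_div] at this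
    calc 1 / (y + 1) = 1 - y / (y + 1) := by field_simp; ring
      _ ≤ _ := this
  have hloglog : (log (y + 1) - log y) / log (y + 1) ≤ log (log (y + 1)) - log (log y) := by
    have := one_sub_inv_le_log_of_pos (x := log (y + 1) / log y) (by positivity)
    rw [log_div hv.ne' hu.ne', inv_div] at this
    calc (log (y + 1) - log y) / log (y + 1) = 1 - log y / log (y + 1) := by field_simp
      _ ≤ _ := this
  calc 1 / ((y + 1) * log (y + 1)) = 1 / (y + 1) / log (y + 1) := by rw [div_div]
    _ ≤ (log (y + 1) - log y) / log (y + 1) := by gcongr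
    _ ≤ _ := hloglog

lemma sum_Icc_one_div_mul_log_le {N : ℕ} (hN : 2 ≤ N) :
    ∑ n ∈ Icc 2 N, 1 / ((n : ℝ) * log n) ≤ log (log N) + 2 := by
  induction N, hN using Nat.le_induction with
  | base =>
    have h2 : (1 : ℝ) / 2 < log 2 := by linarith [log_two_gt_d9]
    have := one_sub_inv_le_log_of_pos (x := log 2) (by linarith)
    have : (log 2)⁻¹ < 2 := by rw [inv_lt_comm₀ (by linarith) (by norm_num)]; linarith
    have : 1 / (2 * log 2) < 1 := by rw [div_lt_one (by linarith)]; linarith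
    simp only [Icc_self, sum_singleton, Nat.cast_ofNat]
    linarith
  | succ n hn ih =>
    rw [sum_Icc_succ_top (by omega), Nat.cast_succ]
    have := one_div_mul_log_le_log_log_sub (y := n) (by exact_mod_cast hn)
    linarith

lemma sum_primesBelow_one_div_mul_log_le {N : ℕ} (hN : 2 ≤ N) :
    ∑ p ∈ (N + 1).primesBelow, 1 / ((p : ℝ) * log p) ≤ log (log N) + 2 := by
  refine le_trans ?_ (sum_Icc_one_div_mul_log_le hN)
  refine sum_le_sum_of_subset_of_nonneg (fun p hp => ?_) (fun n hn _ => ?_)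
  · have := Nat.lt_of_mem_primesBelow hp
    exact mem_Icc.mpr ⟨(Nat.prime_of_mem_primesBelow hp).two_le, by omega⟩
  · have : (2 : ℝ) ≤ n := by exact_mod_cast (mem_Icc.mp hn).1
    have := log_pos (by linarith : (1 : ℝ) < n)
    positivity

lemma sum_Icc_one_div_rad_le {N : ℕ} (hN : 2 ≤ N) {σ : ℝ} (hσ : 0 < σ) :
    ∑ m ∈ Icc 1 N, 1 / (rad m : ℝ) ≤ (N : ℝ) ^ σ * exp ((log (log N) + 2) / σ) := by
  have hfactor : ∀ p ∈ (N + 1).primesBelow,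
      ∑' k, rankinWeight σ (p ^ k) ≤ exp (σ⁻¹ * (1 / ((p : ℝ) * log p))) := fun p hp => by
    convert rankinWeight.tsum_prime_pow_le_exp hσ (Nat.prime_of_mem_primesBelow hp) using 2
    field_simp
  calc ∑ m ∈ Icc 1 N, 1 / (rad m : ℝ)
      ≤ ∑ m ∈ Icc 1 N, (N : ℝ) ^ σ * rankinWeight σ m := sum_le_sum fun m hm =>
        one_div_rad_le_rpow_mul_rankinWeight hσ.le (mem_Icc.mp hm).1 (mem_Icc.mp hm).2
    _ = (N : ℝ) ^ σ * ∑ m ∈ Icc 1 N, rankinWeight σ m := (mul_sum ..).symm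
    _ ≤ (N : ℝ) ^ σ * ∏ p ∈ (N + 1).primesBelow, exp (σ⁻¹ * (1 / ((p : ℝ) * log p))) := by
        gcongr
        refine (rankinWeight.sum_Icc_le_prod_primesBelow hσ N).trans ?_
        exact prod_le_prod (fun p _ => tsum_nonneg fun k => rankinWeight.nonneg σ _) hfactor
    _ = (N : ℝ) ^ σ * exp (σ⁻¹ * ∑ p ∈ (N + 1).primesBelow, 1 / ((p : ℝ) * log p)) := by
        rw [← exp_sum, mul_sum]
    _ ≤ (N : ℝ) ^ σ * exp ((log (log N) + 2) / σ) := by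
        rw [div_eq_inv_mul]
        gcongr
        exact sum_primesBelow_one_div_mul_log_le hN

lemma rankin_exponent_le {a b c : ℝ} (hb : 1 ≤ b) (hc : 1 ≤ c) (ha : 14 * b ^ 3 ≤ a) :
    a * (c / (2 * b)) + (b + 2) / (c / (2 * b)) ≤ a * (c / b) - log 2 := by
  have hlog2 : log 2 ≤ 1 := by linarith [log_two_lt_d9]
  have hgain : 7 * b ^ 2 ≤ a * (c / b) - a * (c / (2 * b)) := by
    have : a * (c / b) - a * (c / (2 * b)) = a * c / (2 * b) := by field_simp; ring
    have hac : 14 * b ^ 3 * 1 ≤ a * c :=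
      mul_le_mul ha hc zero_le_one (le_trans (by positivity) ha)
    rw [this, le_div_iff₀ (by positivity)]
    nlinarith
  have hcost : (b + 2) / (c / (2 * b)) ≤ 2 * b * (b + 2) := by
    rw [div_div_eq_mul_div, div_le_iff₀ (by positivity)]
    nlinarith
  nlinarith

lemma sum_Icc_floor_one_div_rad_le_L {x : ℝ} (hx : 2 ≤ x) (hb : 1 ≤ log (log x))
    (hc : 1 ≤ log (log (log x))) (ha : 14 * log (log x) ^ 3 ≤ log x) :
    ∑ m ∈ Icc 1 ⌊x⌋₊, 1 / (rad m : ℝ) ≤ L x / 2 := by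
  set N := ⌊x⌋₊
  set σ := log (log (log x)) / (2 * log (log x))
  have hσ : 0 < σ := by positivity
  have hN : 2 ≤ N := Nat.le_floor (by exact_mod_cast hx)
  have hN0 : (0 : ℝ) < N := by exact_mod_cast (by omega : 0 < N)
  have hNx : (N : ℝ) ≤ x := Nat.floor_le (by linarith)
  have hlogN : 0 < log N := log_pos (by exact_mod_cast hN)
  have hloglogN : log (log N) ≤ log (log x) := log_le_log hlogN (log_le_log hN0 hNx)
  calc ∑ m ∈ Icc 1 N, 1 / (rad m : ℝ) ≤ (N : ℝ) ^ σ * exp ((log (log N) + 2) / σ) :=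
        sum_Icc_one_div_rad_le hN hσ
    _ ≤ x ^ σ * exp ((log (log x) + 2) / σ) := by gcongr
    _ = exp (log x * σ + (log (log x) + 2) / σ) := by
        rw [rpow_def_of_pos (by linarith), exp_add]
    _ ≤ exp (log x * (log (log (log x)) / log (log x)) - log 2) :=
        exp_le_exp.mpr (rankin_exponent_le hb hc ha)
    _ = L x / 2 := by rw [exp_sub, exp_log two_pos, L]

lemma eventually_sum_Icc_floor_one_div_rad_le_L :
    ∀ᶠ x in atTop, ∑ m ∈ Icc 1 ⌊x⌋₊, 1 / (rad m : ℝ) ≤ L x / 2 := by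
  have hlog := tendsto_log_atTop
  have hcube : ∀ᶠ y in atTop, 14 * log y ^ 3 ≤ y := by
    filter_upwards [(isLittleO_pow_log_id_atTop (n := 3)).bound (by norm_num : (0 : ℝ) < 1 / 14),
      eventually_ge_atTop 0] with y hy hy0
    rw [id, norm_of_nonneg hy0, norm_eq_abs] at hy
    linarith [le_abs_self (log y ^ 3)]
  filter_upwards [eventually_ge_atTop 2, (hlog.comp hlog).eventually_ge_atTop 1,
    (hlog.comp (hlog.comp hlog)).eventually_ge_atTop 1, hlog.eventually hcube]
    with x hx hb hc ha
  exact sum_Icc_floor_one_div_rad_le_L hx hb hc ha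

theorem K_large_prime_factor_bound :
    ∃ C : ℝ, ∃ x₀ : ℝ, ∀ x : ℝ, x₀ ≤ x →
      ((((Finset.Icc 1 ⌊x⌋₊).filter
        (fun n => 1 < n ∧ ¬ n.Prime ∧ rad n.totient ∣ n - 1 ∧
          ∃ p : ℕ, p.Prime ∧ p ∣ n ∧ (L x) ^ 2 < (p : ℝ))).card : ℝ))
        ≤ C * x / L x := by
  obtain ⟨x₀, hx₀⟩ := eventually_atTop.mp
    (eventually_sum_Icc_floor_one_div_rad_le_L.and (eventually_ge_atTop 0))
  refine ⟨1, x₀, fun x hx => ?_⟩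
  obtain ⟨hsum, hx0⟩ := hx₀ x hx
  have hL : 0 < L x := exp_pos _
  calc _ ≤ (#{n ∈ Icc 1 ⌊x⌋₊ | ¬ n.Prime ∧ rad n.totient ∣ n - 1 ∧
          ∃ p : ℕ, p.Prime ∧ p ∣ n ∧ L x ^ 2 < p} : ℝ) := by
        exact_mod_cast card_le_card (monotone_filter_right _ fun _ _ (h : _ ∧ _) => h.2)
    _ ≤ ⌊x⌋₊ / L x ^ 2 * ∑ m ∈ Icc 1 ⌊x⌋₊, 1 / (rad m : ℝ) :=
        card_filter_rad_totient_dvd_le (by positivity) _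
    _ ≤ x / L x ^ 2 * (L x / 2) := by gcongr; exact Nat.floor_le hx0
    _ ≤ 1 * x / L x := by
        rw [div_mul_div_comm, one_mul, div_le_div_iff₀ (by positivity) hL]
        nlinarith [mul_nonneg hx0 (pow_pos hL 3).le]
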